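/- Let f : ℝⁿ → ℝ be convex with L-Lipschitz gradient, minimizer x⋆, and 0 < s ≤ 1/L. Define x₀ = y₀, y_{k+1} = x_k - s∇f(x_k), x_{k+1} = y_{k+1} + (k/(k+3))(y_{k+1} - y_k) - s((k/(k+3))∇f(y_{k+1}) - ((k-1)/(k+3))∇f(y_k)). Then for all k ≥ 0: min_{0≤i≤k} ‖∇f(x_i) + ∇f(y_i)‖² ≤ 882‖x₀ - x⋆‖²/(s²(k+1)³) and f(y_k) - f(x⋆) ≤ 21‖x₀ - x⋆‖²/(s(k+1)²). -/

import Mathlib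

/-!
Along the scheme, `w k = ½((k+2) x k - k y k + (k-1) s ∇f(y k))` moves by
`w (k+1) = w k - s(k+2)/2 ∇f(x k)`, so the change of the Lyapunov function
`E k = s(k+1)²/4 (f(y k) - f x⋆) + ½‖w k - x⋆‖²` is controlled by three inequalities valid for
convex `f` with `L`-Lipschitz gradient and `s ≤ 1/L`: the descent of the gradient step at `x k`,
and `f a ≤ f b + ⟪∇f a, a - b⟫ - s/2 ‖∇f a - ∇f b‖²` at `(x k, x⋆)` and at `(x k, y k)`.
For `k ≥ 1` each step dissipates `s²(k+1)²/32 ‖∇f(x k) + ∇f(y k)‖²`; summing these bounds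
`∑ (i+1)² ‖∇f(x i) + ∇f(y i)‖²` by a multiple of `‖x 0 - x⋆‖²/s²`, which gives the cubic rate
for the smallest term, while `E k ≤ E 0 ≤ 5/4 ‖x 0 - x⋆‖²` gives the rate for `f(y k)`.
-/

open Set Finset
open scoped RealInnerProductSpace

theorem Finset.exists_sum_mul_le_sum_mul {ι R : Type*} [Semiring R] [LinearOrder R]
    [IsOrderedRing R] {t : Finset ι} (ht : t.Nonempty) {w a : ι → R} (hw : ∀ i ∈ t, 0 ≤ w i) :
    ∃ i ∈ t, (∑ j ∈ t, w j) * a i ≤ ∑ j ∈ t, w j * a j := by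
  obtain ⟨i, hi, hmin⟩ := t.exists_min_image a ht
  refine ⟨i, hi, ?_⟩
  rw [sum_mul]
  exact sum_le_sum fun j hj => mul_le_mul_of_nonneg_left (hmin j hj) (hw j hj)

theorem cube_div_three_le_sum_range_sq (n : ℕ) :
    (n : ℝ) ^ 3 / 3 ≤ ∑ i ∈ range n, ((i : ℝ) + 1) ^ 2 := by
  induction n with
  | zero => simp
  | succ n ih =>
    rw [sum_range_succ]
    push_cast
    nlinarith [(n.cast_nonneg : (0 : ℝ) ≤ n)]

section Smooth

variable {F : Type*} [NormedAddCommGroup F] {f : F → ℝ} {g : F → F} {L s : ℝ}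

theorem mul_norm_le_norm_sub_of_gradient_eq_zero {xstar : F} (hgstar : g xstar = 0)
    (hlip : ∀ a b, ‖g a - g b‖ ≤ L * ‖a - b‖) (hs : 0 ≤ s) (hsL : s * L ≤ 1) (a : F) :
    s * ‖g a‖ ≤ ‖a - xstar‖ := by
  have hlip_a : ‖g a‖ ≤ L * ‖a - xstar‖ := by simpa [hgstar] using hlip a xstar
  nlinarith [mul_le_mul_of_nonneg_left hlip_a hs,
    mul_le_mul_of_nonneg_right hsL (norm_nonneg (a - xstar))]

variable [InnerProductSpace ℝ F] [CompleteSpace F]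

theorem IsLocalMin.hasGradientAt_eq_zero {a : F} {g' : F} (h : IsLocalMin f a)
    (hf : HasGradientAt f g' a) : g' = 0 :=
  (InnerProductSpace.toDual ℝ F).map_eq_zero_iff.mp
    (h.hasFDerivAt_eq_zero (hasGradientAt_iff_hasFDerivAt.mp hf))

theorem hasDerivAt_add_smul_of_hasGradientAt (hgrad : ∀ x, HasGradientAt f (g x) x)
    (a v : F) (t : ℝ) :
    HasDerivAt (fun t : ℝ => f (a + t • v)) ⟪g (a + t • v), v⟫ t := by
  have hline : HasDerivAt (fun t : ℝ => a + t • v) v t := by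
    simpa using ((hasDerivAt_id t).smul_const v).const_add a
  simpa [Function.comp_def] using
    (hasGradientAt_iff_hasFDerivAt.mp (hgrad (a + t • v))).comp_hasDerivAt t hline

theorem le_add_inner_add_sq_of_lipschitz_gradient (hgrad : ∀ x, HasGradientAt f (g x) x)
    (hlip : ∀ a b, ‖g a - g b‖ ≤ L * ‖a - b‖) (a b : F) :
    f b ≤ f a + ⟪g a, b - a⟫ + L / 2 * ‖b - a‖ ^ 2 := by
  set v := b - a
  let φ : ℝ → ℝ := fun t => f (a + t • v) - t * ⟪g a, v⟫ - L / 2 * ‖v‖ ^ 2 * t ^ 2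
  have hφ : ∀ t, HasDerivAt φ (⟪g (a + t • v), v⟫ - ⟪g a, v⟫ - L * ‖v‖ ^ 2 * t) t := by
    intro t
    refine (((hasDerivAt_add_smul_of_hasGradientAt hgrad a v t).sub
      ((hasDerivAt_id t).mul_const ⟪g a, v⟫)).sub
      ((hasDerivAt_pow 2 t).const_mul (L / 2 * ‖v‖ ^ 2))).congr_deriv ?_
    simp only [Nat.cast_ofNat]
    ring
  have hφ_anti : AntitoneOn φ (Icc 0 1) := by
    have hdiff : Differentiable ℝ φ := fun t => (hφ t).differentiableAt
    refine antitoneOn_of_deriv_nonpos (convex_Icc 0 1) hdiff.continuous.continuousOn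
      hdiff.differentiableOn fun t ht => ?_
    rw [interior_Icc] at ht
    have hlip_t : ⟪g (a + t • v) - g a, v⟫ ≤ L * ‖v‖ ^ 2 * t := calc
      _ ≤ ‖g (a + t • v) - g a‖ * ‖v‖ := real_inner_le_norm _ _
      _ ≤ L * ‖a + t • v - a‖ * ‖v‖ := by gcongr; exact hlip _ _
      _ = L * ‖v‖ ^ 2 * t := by
        rw [add_sub_cancel_left, norm_smul, Real.norm_of_nonneg ht.1.le]; ring
    rw [inner_sub_left] at hlip_t
    rw [(hφ t).deriv]
    linarith
  have h01 := hφ_anti (left_mem_Icc.mpr zero_le_one) (right_mem_Icc.mpr zero_le_one) zero_le_one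
  simp only [φ, zero_smul, add_zero, one_smul, add_sub_cancel, zero_mul, sub_zero,
    one_pow, mul_one, one_mul, v] at h01
  linarith

theorem ConvexOn.add_inner_le_of_hasGradientAt (hconv : ConvexOn ℝ univ f)
    (hgrad : ∀ x, HasGradientAt f (g x) x) (a b : F) :
    f a + ⟪g a, b - a⟫ ≤ f b := by
  have hline : ConvexOn ℝ univ (fun t : ℝ => f (a + t • (b - a))) := by
    have hcomp : (fun t : ℝ => f (a + t • (b - a))) = f ∘ AffineMap.lineMap a b := by
      ext t; simp [AffineMap.lineMap_apply, add_comm]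
    simpa [hcomp] using hconv.comp_affineMap (AffineMap.lineMap a b)
  have := hline.le_slope_of_hasDerivAt (mem_univ 0) (mem_univ 1) one_pos
    (by simpa using hasDerivAt_add_smul_of_hasGradientAt hgrad a (b - a) 0)
  simp [slope_def_field] at this
  linarith

theorem apply_gradient_step_le (hgrad : ∀ x, HasGradientAt f (g x) x)
    (hlip : ∀ a b, ‖g a - g b‖ ≤ L * ‖a - b‖) (hs : 0 ≤ s) (hsL : s * L ≤ 1) (a : F) :
    f (a - s • g a) ≤ f a - s / 2 * ‖g a‖ ^ 2 := by
  have h := le_add_inner_add_sq_of_lipschitz_gradient hgrad hlip a (a - s • g a)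
  rw [sub_sub_cancel_left, inner_neg_right, real_inner_smul_right, real_inner_self_eq_norm_sq,
    norm_neg, norm_smul, Real.norm_of_nonneg hs] at h
  nlinarith [mul_nonneg (mul_nonneg hs (sq_nonneg ‖g a‖)) (sub_nonneg.2 hsL)]

theorem ConvexOn.le_add_inner_sub_norm_sq (hconv : ConvexOn ℝ univ f)
    (hgrad : ∀ x, HasGradientAt f (g x) x) (hL : 0 < L)
    (hlip : ∀ a b, ‖g a - g b‖ ≤ L * ‖a - b‖) (hsL : s * L ≤ 1) (a b : F) :
    f a ≤ f b + ⟪g a, a - b⟫ - s / 2 * ‖g a - g b‖ ^ 2 := by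
  set d := g a - g b
  -- convexity at `a` and the descent lemma at `b`, both evaluated at `b + L⁻¹ • d`
  have hconv_a := hconv.add_inner_le_of_hasGradientAt hgrad a (b + L⁻¹ • d)
  have hdesc_b := le_add_inner_add_sq_of_lipschitz_gradient hgrad hlip b (b + L⁻¹ • d)
  have hd : ‖d‖ ^ 2 = ⟪g a, d⟫ - ⟪g b, d⟫ := by rw [← inner_sub_left, real_inner_self_eq_norm_sq]
  have hsL' : s ≤ L⁻¹ := by rwa [← one_div, le_div_iff₀ hL]
  rw [add_sub_cancel_left, norm_smul, Real.norm_of_nonneg (inv_nonneg.2 hL.le),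
    real_inner_smul_right] at hdesc_b
  rw [add_sub_right_comm, inner_add_right, real_inner_smul_right, ← neg_sub a b,
    inner_neg_right] at hconv_a
  have hLL : L * L⁻¹ = 1 := mul_inv_cancel₀ hL.ne'
  linear_combination hconv_a + hdesc_b + L⁻¹ * hd
    + (1 / 2) * mul_le_mul_of_nonneg_right hsL' (sq_nonneg ‖d‖) + (L⁻¹ * ‖d‖ ^ 2 / 2) * hLL

end Smooth

section Scheme

variable {F : Type*} [NormedAddCommGroup F] [InnerProductSpace ℝ F]

structure IsModifiedNAGC (g : F → F) (s : ℝ) (x y : ℕ → F) : Prop where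
  y_succ : ∀ k : ℕ, y (k + 1) = x k - s • g (x k)
  x_succ : ∀ k : ℕ, x (k + 1) = y (k + 1) + ((k : ℝ) / ((k : ℝ) + 3)) • (y (k + 1) - y k)
    - s • (((k : ℝ) / ((k : ℝ) + 3)) • g (y (k + 1)) - (((k : ℝ) - 1) / ((k : ℝ) + 3)) • g (y k))

namespace ModifiedNAGC

noncomputable def w (g : F → F) (s : ℝ) (x y : ℕ → F) (k : ℕ) : F :=
  (1 / 2 : ℝ) • (((k : ℝ) + 2) • x k - (k : ℝ) • y k + (((k : ℝ) - 1) * s) • g (y k))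

noncomputable def energy (f : F → ℝ) (g : F → F) (s : ℝ) (x y : ℕ → F) (xstar : F) (k : ℕ) : ℝ :=
  s * ((k : ℝ) + 1) ^ 2 / 4 * (f (y k) - f xstar) + 1 / 2 * ‖w g s x y k - xstar‖ ^ 2

variable {f : F → ℝ} {g : F → F} {L s : ℝ} {x y : ℕ → F} {xstar : F}

theorem w_succ (h : IsModifiedNAGC g s x y) (k : ℕ) :
    w g s x y (k + 1) = w g s x y k - (s * ((k : ℝ) + 2) / 2) • g (x k) := by
  have hk : (k : ℝ) + 3 ≠ 0 := by positivity
  simp only [w, h.x_succ k, h.y_succ k]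
  push_cast
  match_scalars <;> field_simp <;> ring

theorem energy_nonneg (hmin : ∀ z, f xstar ≤ f z) (hs : 0 ≤ s) (k : ℕ) :
    0 ≤ energy f g s x y xstar k := by
  have := sub_nonneg.2 (hmin (y k))
  unfold energy
  positivity

variable [CompleteSpace F]

theorem energy_succ_add_le (hconv : ConvexOn ℝ univ f) (hgrad : ∀ x, HasGradientAt f (g x) x)
    (hL : 0 < L) (hlip : ∀ a b, ‖g a - g b‖ ≤ L * ‖a - b‖) (hmin : ∀ z, f xstar ≤ f z)
    (hs : 0 ≤ s) (hsL : s * L ≤ 1) (h : IsModifiedNAGC g s x y) (k : ℕ) :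
    energy f g s x y xstar (k + 1) + s / 4 * (f (y k) - f xstar)
      + s ^ 2 * (((k : ℝ) ^ 2 + 2 * k - 1) / 16) * ‖g (x k) + g (y k)‖ ^ 2
      + s ^ 2 * ‖(((k : ℝ) + 3) / 4) • g (x k) - (((k : ℝ) + 1) / 4) • g (y k)‖ ^ 2
      ≤ energy f g s x y xstar k := by
  have hgstar : g xstar = 0 := (IsLocalMin.hasGradientAt_eq_zero (.of_forall hmin) (hgrad xstar))
  have hdesc : f (y (k + 1)) ≤ f (x k) - s / 2 * ‖g (x k)‖ ^ 2 :=
    h.y_succ k ▸ apply_gradient_step_le hgrad hlip hs hsL (x k)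
  have hstar := hconv.le_add_inner_sub_norm_sq hgrad hL hlip hsL (x k) xstar
  have hprev := hconv.le_add_inner_sub_norm_sq hgrad hL hlip hsL (x k) (y k)
  rw [hgstar, sub_zero] at hstar
  have hw : w g s x y (k + 1) - xstar
      = (w g s x y k - xstar) - (s * ((k : ℝ) + 2) / 2) • g (x k) := by
    rw [w_succ h]; abel
  have hwk : w g s x y k - xstar
      = (x k - xstar) + ((k : ℝ) / 2) • (x k - y k) + (((k : ℝ) - 1) * s / 2) • g (y k) := by
    simp only [w]; module
  simp only [energy]
  rw [hw, norm_sub_sq_real, hwk]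
  push_cast
  simp only [← real_inner_self_eq_norm_sq, inner_add_left, inner_add_right, inner_sub_left,
    inner_sub_right, real_inner_smul_right, real_inner_comm]
    at hdesc hstar hprev ⊢
  -- `(k + 2)² = 2 (k + 2) + k (k + 2)` splits the weight of `hdesc` between `hstar` and `hprev`
  linear_combination (s * ((k : ℝ) + 2) ^ 2 / 4) * hdesc + (s * ((k : ℝ) + 2) / 2) * hstar
    + (s * k * ((k : ℝ) + 2) / 4) * hprev

theorem energy_succ_add_le_of_one_le (hconv : ConvexOn ℝ univ f)
    (hgrad : ∀ x, HasGradientAt f (g x) x) (hL : 0 < L) (hlip : ∀ a b, ‖g a - g b‖ ≤ L * ‖a - b‖)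
    (hmin : ∀ z, f xstar ≤ f z) (hs : 0 ≤ s) (hsL : s * L ≤ 1) (h : IsModifiedNAGC g s x y)
    {k : ℕ} (hk : 1 ≤ k) :
    energy f g s x y xstar (k + 1) + s ^ 2 * ((k : ℝ) + 1) ^ 2 / 32 * ‖g (x k) + g (y k)‖ ^ 2
      ≤ energy f g s x y xstar k := by
  have hstep := energy_succ_add_le hconv hgrad hL hlip hmin hs hsL h k
  have hk' : (1 : ℝ) ≤ k := by exact_mod_cast hk
  have hcoef : s ^ 2 * ((k : ℝ) + 1) ^ 2 / 32 ≤ s ^ 2 * (((k : ℝ) ^ 2 + 2 * k - 1) / 16) := by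
    have : 0 ≤ ((k : ℝ) - 1) * (k + 3) := mul_nonneg (by linarith) (by positivity)
    nlinarith [mul_nonneg (sq_nonneg s) this]
  have := sub_nonneg.2 (hmin (y k))
  nlinarith [mul_le_mul_of_nonneg_right hcoef (sq_nonneg ‖g (x k) + g (y k)‖)]

theorem energy_one_le (hconv : ConvexOn ℝ univ f) (hgrad : ∀ x, HasGradientAt f (g x) x)
    (hL : 0 < L) (hlip : ∀ a b, ‖g a - g b‖ ≤ L * ‖a - b‖) (hmin : ∀ z, f xstar ≤ f z)
    (hs : 0 ≤ s) (hsL : s * L ≤ 1) (h : IsModifiedNAGC g s x y) (h0 : x 0 = y 0) :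
    energy f g s x y xstar 1 ≤ energy f g s x y xstar 0 := by
  have hstep := energy_succ_add_le hconv hgrad hL hlip hmin hs hsL h 0
  -- the coefficient `k² + 2k - 1` is negative at `k = 0`; with `x 0 = y 0` the last term
  -- compensates it exactly
  have hcancel : ((0 : ℝ) ^ 2 + 2 * 0 - 1) / 16 * ‖g (y 0) + g (y 0)‖ ^ 2
      + ‖((0 + 3) / 4 : ℝ) • g (y 0) - ((0 + 1) / 4 : ℝ) • g (y 0)‖ ^ 2 = 0 := by
    rw [← two_smul ℝ, ← sub_smul, norm_smul, norm_smul]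
    norm_num
    ring
  rw [h0, Nat.cast_zero] at hstep
  have := sub_nonneg.2 (hmin (y 0))
  nlinarith

theorem energy_le_energy_zero (hconv : ConvexOn ℝ univ f)
    (hgrad : ∀ x, HasGradientAt f (g x) x) (hL : 0 < L) (hlip : ∀ a b, ‖g a - g b‖ ≤ L * ‖a - b‖)
    (hmin : ∀ z, f xstar ≤ f z) (hs : 0 ≤ s) (hsL : s * L ≤ 1) (h : IsModifiedNAGC g s x y)
    (h0 : x 0 = y 0) (k : ℕ) :
    energy f g s x y xstar k ≤ energy f g s x y xstar 0 := by
  refine antitone_nat_of_succ_le (fun k => ?_) (Nat.zero_le k)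
  rcases Nat.eq_zero_or_pos k with rfl | hk
  · exact energy_one_le hconv hgrad hL hlip hmin hs hsL h h0
  · have := energy_succ_add_le_of_one_le hconv hgrad hL hlip hmin hs hsL h hk
    have : 0 ≤ s ^ 2 * ((k : ℝ) + 1) ^ 2 / 32 * ‖g (x k) + g (y k)‖ ^ 2 := by positivity
    linarith

theorem energy_zero_le (hgrad : ∀ x, HasGradientAt f (g x) x)
    (hlip : ∀ a b, ‖g a - g b‖ ≤ L * ‖a - b‖) (hmin : ∀ z, f xstar ≤ f z)
    (hs : 0 ≤ s) (hsL : s * L ≤ 1) (h0 : x 0 = y 0) :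
    energy f g s x y xstar 0 ≤ 5 / 4 * ‖x 0 - xstar‖ ^ 2 := by
  have hgstar : g xstar = 0 := IsLocalMin.hasGradientAt_eq_zero (.of_forall hmin) (hgrad xstar)
  have hgx := mul_norm_le_norm_sub_of_gradient_eq_zero hgstar hlip hs hsL (x 0)
  have hw : ‖w g s x y 0 - xstar‖ ≤ 3 / 2 * ‖x 0 - xstar‖ := calc
    ‖w g s x y 0 - xstar‖ = ‖(x 0 - xstar) - (s / 2) • g (x 0)‖ := by
      congr 1; simp only [w, ← h0]; module
    _ ≤ ‖x 0 - xstar‖ + s / 2 * ‖g (x 0)‖ := by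
      grw [norm_sub_le, norm_smul, Real.norm_of_nonneg (by positivity)]
    _ ≤ 3 / 2 * ‖x 0 - xstar‖ := by linarith
  have hf : f (y 0) - f xstar ≤ L / 2 * ‖x 0 - xstar‖ ^ 2 := by
    have := le_add_inner_add_sq_of_lipschitz_gradient hgrad hlip xstar (x 0)
    rw [hgstar, inner_zero_left, add_zero] at this
    rw [← h0]
    linarith
  have hsf : s * (f (y 0) - f xstar) ≤ 1 / 2 * ‖x 0 - xstar‖ ^ 2 := by
    nlinarith [mul_le_mul_of_nonneg_left hf hs, sq_nonneg ‖x 0 - xstar‖]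
  simp only [energy, Nat.cast_zero]
  nlinarith [pow_le_pow_left₀ (norm_nonneg _) hw 2]

theorem sq_mul_sum_mul_norm_sq_le (hconv : ConvexOn ℝ univ f)
    (hgrad : ∀ x, HasGradientAt f (g x) x) (hL : 0 < L) (hlip : ∀ a b, ‖g a - g b‖ ≤ L * ‖a - b‖)
    (hmin : ∀ z, f xstar ≤ f z) (hs : 0 ≤ s) (hsL : s * L ≤ 1) (h : IsModifiedNAGC g s x y)
    (h0 : x 0 = y 0) (k : ℕ) :
    s ^ 2 * ∑ i ∈ range (k + 1), ((i : ℝ) + 1) ^ 2 * ‖g (x i) + g (y i)‖ ^ 2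
      ≤ 44 * ‖x 0 - xstar‖ ^ 2 := by
  have hgstar : g xstar = 0 := IsLocalMin.hasGradientAt_eq_zero (.of_forall hmin) (hgrad xstar)
  have hfirst : s ^ 2 * ‖g (x 0) + g (y 0)‖ ^ 2 ≤ 4 * ‖x 0 - xstar‖ ^ 2 := by
    have := mul_norm_le_norm_sub_of_gradient_eq_zero hgstar hlip hs hsL (x 0)
    rw [← h0, ← two_smul ℝ, norm_smul, Real.norm_two]
    nlinarith [norm_nonneg (g (x 0)), mul_nonneg hs (norm_nonneg (g (x 0)))]
  have htail : s ^ 2 * ∑ i ∈ range k,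
        (((i + 1 : ℕ) : ℝ) + 1) ^ 2 * ‖g (x (i + 1)) + g (y (i + 1))‖ ^ 2
      ≤ 32 * (energy f g s x y xstar 1 - energy f g s x y xstar (k + 1)) := by
    rw [← sum_range_sub' (fun i => energy f g s x y xstar (i + 1)), mul_sum, mul_sum]
    refine sum_le_sum fun i _ => ?_
    have := energy_succ_add_le_of_one_le hconv hgrad hL hlip hmin hs hsL h (Nat.le_add_left 1 i)
    linarith
  have hE := energy_le_energy_zero hconv hgrad hL hlip hmin hs hsL h h0 1
  have := energy_nonneg (g := g) (x := x) (y := y) hmin hs (k + 1)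
  have := energy_zero_le hgrad hlip hmin hs hsL h0
  rw [sum_range_succ', Nat.cast_zero, zero_add, one_pow, one_mul]
  linarith

theorem exists_norm_sq_gradient_add_le (hconv : ConvexOn ℝ univ f)
    (hgrad : ∀ x, HasGradientAt f (g x) x) (hL : 0 < L) (hlip : ∀ a b, ‖g a - g b‖ ≤ L * ‖a - b‖)
    (hmin : ∀ z, f xstar ≤ f z) (hs : 0 < s) (hsL : s * L ≤ 1) (h : IsModifiedNAGC g s x y)
    (h0 : x 0 = y 0) (k : ℕ) :
    ∃ i ≤ k, ‖g (x i) + g (y i)‖ ^ 2 ≤ 132 * ‖x 0 - xstar‖ ^ 2 / (s ^ 2 * ((k : ℝ) + 1) ^ 3) := by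
  obtain ⟨i, hi, hmin_i⟩ := exists_sum_mul_le_sum_mul nonempty_range_add_one
    (fun i _ => sq_nonneg ((i : ℝ) + 1)) (a := fun i => ‖g (x i) + g (y i)‖ ^ 2)
  refine ⟨i, Nat.lt_succ_iff.mp (mem_range.mp hi), ?_⟩
  have hsum := sq_mul_sum_mul_norm_sq_le hconv hgrad hL hlip hmin hs.le hsL h h0 k
  have hcube := cube_div_three_le_sum_range_sq (k + 1)
  push_cast at hcube
  rw [le_div_iff₀ (by positivity)]
  nlinarith [mul_le_mul_of_nonneg_left hmin_i (sq_nonneg s),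
    mul_le_mul_of_nonneg_right hcube (mul_nonneg (sq_nonneg s) (sq_nonneg ‖g (x i) + g (y i)‖))]

theorem objective_gap_le (hconv : ConvexOn ℝ univ f)
    (hgrad : ∀ x, HasGradientAt f (g x) x) (hL : 0 < L) (hlip : ∀ a b, ‖g a - g b‖ ≤ L * ‖a - b‖)
    (hmin : ∀ z, f xstar ≤ f z) (hs : 0 < s) (hsL : s * L ≤ 1) (h : IsModifiedNAGC g s x y)
    (h0 : x 0 = y 0) (k : ℕ) :
    f (y k) - f xstar ≤ 5 * ‖x 0 - xstar‖ ^ 2 / (s * ((k : ℝ) + 1) ^ 2) := by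
  have hE := energy_le_energy_zero hconv hgrad hL hlip hmin hs.le hsL h h0 k
  have hE0 := energy_zero_le hgrad hlip hmin hs.le hsL h0
  have := sq_nonneg ‖w g s x y k - xstar‖
  rw [le_div_iff₀ (by positivity)]
  unfold energy at hE hE0
  linarith

end ModifiedNAGC

end Scheme

theorem modified_nag_c_convergence_general {n : ℕ}
    (f : EuclideanSpace ℝ (Fin n) → ℝ)
    (g : EuclideanSpace ℝ (Fin n) → EuclideanSpace ℝ (Fin n))
    (L s : ℝ)
    (hgrad : ∀ x, HasGradientAt f (g x) x)
    (hconv : ConvexOn ℝ Set.univ f)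
    (hlip : ∀ a b, ‖g a - g b‖ ≤ L * ‖a - b‖)
    (xstar : EuclideanSpace ℝ (Fin n)) (hmin : ∀ z, f xstar ≤ f z)
    (hs : 0 < s) (hsL : s ≤ 1 / L)
    (x y : ℕ → EuclideanSpace ℝ (Fin n)) (h0 : x 0 = y 0)
    (hy : ∀ k : ℕ, y (k + 1) = x k - s • g (x k))
    (hx : ∀ k : ℕ, x (k + 1) = y (k + 1) + ((k : ℝ) / ((k : ℝ) + 3)) • (y (k + 1) - y k)
          - s • (((k : ℝ) / ((k : ℝ) + 3)) • g (y (k + 1))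
                  - (((k : ℝ) - 1) / ((k : ℝ) + 3)) • g (y k))) :
    ∀ k : ℕ,
      (∃ i ≤ k, ‖g (x i) + g (y i)‖ ^ 2
          ≤ 882 * ‖x 0 - xstar‖ ^ 2 / (s ^ 2 * ((k : ℝ) + 1) ^ 3)) ∧
      f (y k) - f xstar ≤ 21 * ‖x 0 - xstar‖ ^ 2 / (s * ((k : ℝ) + 1) ^ 2) := by
  have hL : 0 < L := one_div_pos.mp (hs.trans_le hsL)
  have hsL' : s * L ≤ 1 := (le_div_iff₀ hL).mp hsL
  have h : IsModifiedNAGC g s x y := ⟨hy, hx⟩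
  intro k
  obtain ⟨i, hik, hi⟩ :=
    ModifiedNAGC.exists_norm_sq_gradient_add_le hconv hgrad hL hlip hmin hs hsL' h h0 k
  refine ⟨⟨i, hik, hi.trans ?_⟩,
    (ModifiedNAGC.objective_gap_le hconv hgrad hL hlip hmin hs hsL' h h0 k).trans ?_⟩ <;>
  gcongr <;> norm_num

/-- Convergence theorem for the modified NAG-C method. -/
theorem modified_nag_c_convergence {n : ℕ}
    (f : EuclideanSpace ℝ (Fin n) → ℝ)
    (g : EuclideanSpace ℝ (Fin n) → EuclideanSpace ℝ (Fin n))
    (L s : ℝ) (hL : 0 < L)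
    (hgrad : ∀ x, HasGradientAt f (g x) x)
    (hconv : ConvexOn ℝ Set.univ f)
    (hlip : ∀ a b, ‖g a - g b‖ ≤ L * ‖a - b‖)
    (xstar : EuclideanSpace ℝ (Fin n)) (hmin : ∀ z, f xstar ≤ f z)
    (hs : 0 < s) (hsL : s ≤ 1 / L)
    (x y : ℕ → EuclideanSpace ℝ (Fin n)) (h0 : x 0 = y 0)
    (hy : ∀ k : ℕ, y (k + 1) = x k - s • g (x k))
    (hx : ∀ k : ℕ, x (k + 1) = y (k + 1) + ((k : ℝ) / ((k : ℝ) + 3)) • (y (k + 1) - y k)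
          - s • (((k : ℝ) / ((k : ℝ) + 3)) • g (y (k + 1))
                  - (((k : ℝ) - 1) / ((k : ℝ) + 3)) • g (y k))) :
    ∀ k : ℕ,
      (∃ i ≤ k, ‖g (x i) + g (y i)‖ ^ 2
          ≤ 882 * ‖x 0 - xstar‖ ^ 2 / (s ^ 2 * ((k : ℝ) + 1) ^ 3)) ∧
      f (y k) - f xstar ≤ 21 * ‖x 0 - xstar‖ ^ 2 / (s * ((k : ℝ) + 1) ^ 2) :=
  modified_nag_c_convergence_general f g L s hgrad hconv hlip xstar hmin hs hsL x y h0 hy hx
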